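/- The function ω : SL₂(ℝ) × SL₂(ℝ) → ℝ given by ω(g,h) = (1/(2πi))(Log j(g,h·z) + Log j(h,z) − Log j(gh,z)) (for any z ∈ ℍ) is a 2-cocycle taking values in ℤ: ω(g,h) ∈ {−1, 0, 1} and ω(h,k) − ω(gh,k) + ω(g,hk) − ω(g,h) = 0 for all g,h,k ∈ SL₂(ℝ). -/

import Mathlib

open Complex

/-- The automorphy factor `j(g,z) = cz + d` for `g = (a b; c d) ∈ SL₂(ℝ)`. -/
noncomputable def jf (g : Matrix.SpecialLinearGroup (Fin 2) ℝ) (z : ℂ) : ℂ :=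
  (g.1 1 0 : ℝ) * z + (g.1 1 1 : ℝ)

/-- The Möbius action `g·z = (az+b)/(cz+d)`. -/
noncomputable def act (g : Matrix.SpecialLinearGroup (Fin 2) ℝ) (z : ℂ) : ℂ :=
  ((g.1 0 0 : ℝ) * z + (g.1 0 1 : ℝ)) / jf g z

/-- `ω(g,h) = (1/(2πi))(Log j(g,h·z) + Log j(h,z) − Log j(gh,z))`. -/
noncomputable def om (g h : Matrix.SpecialLinearGroup (Fin 2) ℝ) (z : ℂ) : ℂ :=
  (1 / (2 * Real.pi * I)) *
    (Complex.log (jf g (act h z)) + Complex.log (jf h z) - Complex.log (jf (g * h) z))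

/-!
Since `j(gh, z) = j(g, h·z) j(h, z)`, the exponential of `2πi ω(g,h)` is `1`, and the bounds
`-π < Arg ≤ π` leave only the integers `-1, 0, 1`. As a function of `z`, `ω(g,h)` is continuous on
the connected half-plane with values in a finite set, hence constant. The coboundary of `ω` at
`z` is `ω(g,h)(k·z) - ω(g,h)(z)`, which therefore vanishes.
-/

theorem Complex.log_add_log_sub_log_mul_mem {a b : ℂ} (ha : a ≠ 0) (hb : b ≠ 0) :
    1 / (2 * Real.pi * I) * (log a + log b - log (a * b)) ∈ ({-1, 0, 1} : Set ℂ) := by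
  have hab := mul_ne_zero ha hb
  have hexp : exp (log a + log b - log (a * b)) = 1 := by
    rw [exp_sub, exp_add, exp_log ha, exp_log hb, exp_log hab, div_self hab]
  obtain ⟨n, hn⟩ := exp_eq_one_iff.mp hexp
  have harg : arg a + arg b - arg (a * b) = n * (2 * Real.pi) := by
    simpa [log_im] using congrArg im hn
  have hn_lo : (-2 : ℝ) < n := by
    nlinarith [Real.pi_pos, neg_pi_lt_arg a, neg_pi_lt_arg b, arg_le_pi (a * b)]
  have hn_hi : (n : ℝ) < 2 := by
    nlinarith [Real.pi_pos, arg_le_pi a, arg_le_pi b, neg_pi_lt_arg (a * b)]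
  have h2pi : (2 * Real.pi * I) ≠ 0 := by simp [Real.pi_ne_zero]
  rw [hn, one_div_mul_eq_div, mul_div_cancel_right₀ _ h2pi]
  obtain rfl | rfl | rfl : n = -1 ∨ n = 0 ∨ n = 1 := by
    have : -2 < n := by exact_mod_cast hn_lo
    have : n < 2 := by exact_mod_cast hn_hi
    omega
  all_goals simp

open UpperHalfPlane
open scoped MatrixGroups

section

variable (g h : SL(2, ℝ))

theorem jf_eq_denom (z : ℂ) : jf g z = denom (g : GL (Fin 2) ℝ) z := by
  simp [jf, denom]

theorem act_coe (τ : ℍ) : act g τ = ↑(g • τ) := by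
  simp [coe_specialLinearGroup_apply, act, jf]

theorem jf_ne_zero (τ : ℍ) : jf g τ ≠ 0 := by
  rw [jf_eq_denom]
  exact denom_ne_zero _ τ

theorem jf_mul (τ : ℍ) : jf (g * h) τ = jf g ↑(h • τ) * jf h τ := by
  have hj := jf_ne_zero h τ
  rw [← act_coe, jf.eq_1 g, act, add_mul, mul_assoc, div_mul_cancel₀ _ hj]
  unfold jf
  simp only [Matrix.SpecialLinearGroup.coe_mul, Matrix.mul_apply, Fin.sum_univ_two]
  push_cast
  ring

theorem om_mem (τ : ℍ) : om g h τ ∈ ({-1, 0, 1} : Set ℂ) := by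
  rw [om, jf_mul, act_coe]
  exact log_add_log_sub_log_mul_mem (jf_ne_zero g _) (jf_ne_zero h τ)

-- For `c = 0` the value `j(g, τ) = d` may lie on the branch cut of `log`, but it is constant.
theorem continuous_log_jf : Continuous fun τ : ℍ => log (jf g τ) := by
  by_cases hc : g 1 0 = 0
  · simp only [jf, hc, Complex.ofReal_zero, zero_mul, zero_add]
    exact continuous_const
  · refine Continuous.clog (by unfold jf; fun_prop) fun τ => mem_slitPlane_iff.mpr (Or.inr ?_)
    simp [jf, hc, τ.im_ne_zero]

theorem continuous_om : Continuous fun τ : ℍ => om g h τ := by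
  simp only [om, act_coe]
  exact continuous_const.mul
    ((((continuous_log_jf g).comp (continuous_const_smul h)).add (continuous_log_jf h)).sub
      (continuous_log_jf (g * h)))

theorem om_eq_om (τ τ' : ℍ) : om g h τ = om g h τ' :=
  isPreconnected_univ.constant_of_mapsTo (Set.toFinite _).isDiscrete
    (continuous_om g h).continuousOn (fun τ _ => om_mem g h τ) trivial trivial

end

theorem om_sub_om_add_om_sub_om (g h k : SL(2, ℝ)) (τ : ℍ) :
    om h k τ - om (g * h) k τ + om g (h * k) τ - om g h τ = om g h ↑(k • τ) - om g h τ := by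
  simp only [om, act_coe, mul_smul, mul_assoc]
  ring

theorem om_integral_two_cocycle (g h k : Matrix.SpecialLinearGroup (Fin 2) ℝ)
    (z : ℂ) (hz : 0 < z.im) :
    om g h z ∈ ({-1, 0, 1} : Set ℂ) ∧
    om h k z - om (g * h) k z + om g (h * k) z - om g h z = 0 := by
  let τ : ℍ := ⟨z, hz⟩
  refine ⟨om_mem g h τ, ?_⟩
  rw [show z = τ from rfl, om_sub_om_add_om_sub_om, om_eq_om g h _ τ, sub_self]
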